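/- The tropicalization of SL_n, defined as the set of n×n matrices A over ℝ ∪ {∞} such that tdet(A) ≤ 0 and, if tdet(A) < 0, the minimum in the definition of tdet(A) is attained by at least two distinct permutations, is closed under tropical (min-plus) matrix multiplication. -/
import Mathlib


/-- Tropical (min-plus) matrix multiplication over ℝ ∪ {∞}. -/
def tropMul {n : ℕ} (A B : Matrix (Fin n) (Fin n) (WithTop ℝ)) :
    Matrix (Fin n) (Fin n) (WithTop ℝ) :=
  fun i j => Finset.univ.inf fun k => A i k + B k j

/-- The tropical determinant: minimum over permutations π of ∑ i, A i (π i). -/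
def tdet {n : ℕ} (A : Matrix (Fin n) (Fin n) (WithTop ℝ)) : WithTop ℝ :=
  Finset.univ.inf fun π : Equiv.Perm (Fin n) => ∑ i, A i (π i)

/-- The tropicalisation of SL_n: matrices with tdet ≤ 0 such that, if tdet < 0,
the minimum over permutations is attained at least twice. -/
def TropSL (n : ℕ) : Set (Matrix (Fin n) (Fin n) (WithTop ℝ)) :=
  {A | tdet A ≤ 0 ∧ (tdet A < 0 → ∃ π σ : Equiv.Perm (Fin n), π ≠ σ ∧
    (∑ i, A i (π i)) = tdet A ∧ (∑ i, A i (σ i)) = tdet A)}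

lemma tdet_le {n : ℕ} (M : Matrix (Fin n) (Fin n) (WithTop ℝ)) (π : Equiv.Perm (Fin n)) :
    tdet M ≤ ∑ i, M i (π i) :=
  Finset.inf_le (Finset.mem_univ π)

lemma exists_tdet {n : ℕ} (M : Matrix (Fin n) (Fin n) (WithTop ℝ)) :
    ∃ π : Equiv.Perm (Fin n), ∑ i, M i (π i) = tdet M := by
  obtain ⟨π, -, h⟩ := Finset.exists_mem_eq_inf (Finset.univ : Finset (Equiv.Perm (Fin n)))
    Finset.univ_nonempty (fun π => ∑ i, M i (π i))
  exact ⟨π, h.symm⟩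

lemma tropMul_le {n : ℕ} (A B : Matrix (Fin n) (Fin n) (WithTop ℝ)) (i j k : Fin n) :
    tropMul A B i j ≤ A i k + B k j :=
  Finset.inf_le (Finset.mem_univ k)

lemma sum_bound {n : ℕ} (A B : Matrix (Fin n) (Fin n) (WithTop ℝ)) (g : Fin n → Fin n)
    (π : Equiv.Perm (Fin n)) :
    ∑ i, tropMul A B i (π i) ≤ ∑ i, (A i (g i) + B (g i) (π i)) :=
  Finset.sum_le_sum fun i _ => tropMul_le A B i (π i) (g i)

lemma sum_comp_bound {n : ℕ} (A B : Matrix (Fin n) (Fin n) (WithTop ℝ))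
    (α β : Equiv.Perm (Fin n)) :
    ∑ i, tropMul A B i ((α.trans β) i) ≤ (∑ i, A i (α i)) + ∑ j, B j (β j) := by
  calc ∑ i, tropMul A B i ((α.trans β) i)
      ≤ ∑ i, (A i (α i) + B (α i) (β (α i))) := sum_bound A B α (α.trans β)
    _ = (∑ i, A i (α i)) + ∑ i, B (α i) (β (α i)) := Finset.sum_add_distrib
    _ = (∑ i, A i (α i)) + ∑ j, B j (β j) := by
        rw [Equiv.sum_comp α (fun j => B j (β j))]

lemma tdet_tropMul_le {n : ℕ} (A B : Matrix (Fin n) (Fin n) (WithTop ℝ)) :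
    tdet (tropMul A B) ≤ tdet A + tdet B := by
  obtain ⟨α, hα⟩ := exists_tdet A
  obtain ⟨β, hβ⟩ := exists_tdet B
  calc tdet (tropMul A B) ≤ ∑ i, tropMul A B i ((α.trans β) i) := tdet_le _ _
    _ ≤ (∑ i, A i (α i)) + ∑ j, B j (β j) := sum_comp_bound A B α β
    _ = tdet A + tdet B := by rw [hα, hβ]

theorem tropSL_closed_under_tropMul {n : ℕ}
    (A B : Matrix (Fin n) (Fin n) (WithTop ℝ))
    (hA : A ∈ TropSL n) (hB : B ∈ TropSL n) :
    tropMul A B ∈ TropSL n := by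
  obtain ⟨hA1, hA2⟩ := hA
  obtain ⟨hB1, hB2⟩ := hB
  have hle : tdet (tropMul A B) ≤ 0 := by
    calc tdet (tropMul A B) ≤ tdet A + tdet B := tdet_tropMul_le A B
      _ ≤ 0 + 0 := add_le_add hA1 hB1
      _ = 0 := by simp
  refine ⟨hle, fun hlt => ?_⟩
  -- a permutation achieving tdet (A ⊙ B)
  obtain ⟨π, hπ⟩ := exists_tdet (tropMul A B)
  -- entrywise minimizing map f
  have hf : ∀ i : Fin n, ∃ k, tropMul A B i (π i) = A i k + B k (π i) := by
    intro i
    haveI : Nonempty (Fin n) := ⟨i⟩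
    obtain ⟨k, -, hk⟩ := Finset.exists_mem_eq_inf (Finset.univ : Finset (Fin n))
      Finset.univ_nonempty (fun k => A i k + B k (π i))
    · exact ⟨k, hk⟩
  choose f hfk using hf
  have hm : ∑ i, (A i (f i) + B (f i) (π i)) = tdet (tropMul A B) := by
    rw [← hπ]; exact Finset.sum_congr rfl fun i _ => (hfk i).symm
  by_cases hinj : Function.Injective f
  · -- f is a bijection
    have hbij : Function.Bijective f := Finite.injective_iff_bijective.mp hinj
    let τ : Equiv.Perm (Fin n) := Equiv.ofBijective f hbij
    have hτ : ∀ i, τ i = f i := fun i => rfl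
    -- reindex the B-part
    have hBsum : ∑ i, B (f i) (π i) = ∑ j, B j ((τ.symm.trans π) j) := by
      rw [← Equiv.sum_comp τ (fun j => B j ((τ.symm.trans π) j))]
      refine Finset.sum_congr rfl fun i _ => ?_
      show B (f i) (π i) = B (τ i) ((τ.symm.trans π) (τ i))
      simp only [Equiv.trans_apply, Equiv.symm_apply_apply]
      rfl
    have hsplit : tdet (tropMul A B) = (∑ i, A i (f i)) + ∑ j, B j ((τ.symm.trans π) j) := by
      rw [← hm, Finset.sum_add_distrib, hBsum]
    have hge : tdet A + tdet B ≤ tdet (tropMul A B) := by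
      rw [hsplit]
      exact add_le_add (tdet_le A τ) (tdet_le B (τ.symm.trans π))
    have heq : tdet A + tdet B = tdet (tropMul A B) :=
      le_antisymm hge (tdet_tropMul_le A B)
    have hone : tdet A < 0 ∨ tdet B < 0 := by
      by_contra hcon
      push_neg at hcon
      have : (0 : WithTop ℝ) ≤ tdet A + tdet B := by
        calc (0 : WithTop ℝ) = 0 + 0 := by simp
          _ ≤ tdet A + tdet B := add_le_add hcon.1 hcon.2
      exact absurd (this.trans_lt (heq ▸ hlt)) (lt_irrefl _)
    rcases hone with hAlt | hBlt
    · obtain ⟨πA, σA, hne, h1, h2⟩ := hA2 hAlt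
      obtain ⟨β, hβ⟩ := exists_tdet B
      have key : ∀ γ : Equiv.Perm (Fin n), (∑ i, A i (γ i)) = tdet A →
          ∑ i, tropMul A B i ((γ.trans β) i) = tdet (tropMul A B) := by
        intro γ hγ
        refine le_antisymm ?_ (tdet_le _ _)
        calc ∑ i, tropMul A B i ((γ.trans β) i)
            ≤ (∑ i, A i (γ i)) + ∑ j, B j (β j) := sum_comp_bound A B γ β
          _ = tdet A + tdet B := by rw [hγ, hβ]
          _ = tdet (tropMul A B) := heq
      refine ⟨πA.trans β, σA.trans β, ?_, key πA h1, key σA h2⟩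
      intro h
      apply hne
      ext i
      exact congrArg Fin.val (β.injective (DFunLike.congr_fun h i))
    · obtain ⟨πB, σB, hne, h1, h2⟩ := hB2 hBlt
      obtain ⟨α, hα⟩ := exists_tdet A
      have key : ∀ γ : Equiv.Perm (Fin n), (∑ j, B j (γ j)) = tdet B →
          ∑ i, tropMul A B i ((α.trans γ) i) = tdet (tropMul A B) := by
        intro γ hγ
        refine le_antisymm ?_ (tdet_le _ _)
        calc ∑ i, tropMul A B i ((α.trans γ) i)
            ≤ (∑ i, A i (α i)) + ∑ j, B j (γ j) := sum_comp_bound A B α γ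
          _ = tdet A + tdet B := by rw [hγ, hα]
          _ = tdet (tropMul A B) := heq
      refine ⟨α.trans πB, α.trans σB, ?_, key πB h1, key σB h2⟩
      intro h
      apply hne
      ext j
      have h2 : πB j = σB j := by
        have := DFunLike.congr_fun h (α.symm j)
        simpa using this
      exact congrArg Fin.val h2
  · -- f is not injective: swap two indices with equal image
    rw [Function.not_injective_iff] at hinj
    obtain ⟨i, j, hfij, hij⟩ := hinj
    set σ : Equiv.Perm (Fin n) := (Equiv.swap i j).trans π with hσ
    have hfswap : ∀ x, f ((Equiv.swap i j) x) = f x := by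
      intro x
      rcases eq_or_ne x i with rfl | hxi
      · simp [Equiv.swap_apply_left, hfij]
      rcases eq_or_ne x j with rfl | hxj
      · simp [Equiv.swap_apply_right, hfij]
      · rw [Equiv.swap_apply_of_ne_of_ne hxi hxj]
    have hsum : ∑ x, (A x (f x) + B (f x) (σ x)) = tdet (tropMul A B) := by
      rw [← hm, Finset.sum_add_distrib, Finset.sum_add_distrib]
      congr 1
      calc ∑ x, B (f x) (σ x) = ∑ x, B (f ((Equiv.swap i j) x)) (π ((Equiv.swap i j) x)) := by
            refine Finset.sum_congr rfl fun x _ => ?_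
            rw [hfswap]
            rfl
        _ = ∑ x, B (f x) (π x) := Equiv.sum_comp (Equiv.swap i j) (fun x => B (f x) (π x))
    have hσsum : ∑ x, tropMul A B x (σ x) = tdet (tropMul A B) := by
      refine le_antisymm ?_ (tdet_le _ _)
      calc ∑ x, tropMul A B x (σ x) ≤ ∑ x, (A x (f x) + B (f x) (σ x)) := sum_bound A B f σ
        _ = tdet (tropMul A B) := hsum
    refine ⟨π, σ, ?_, hπ, hσsum⟩
    intro h
    have : π i = σ i := by rw [h]
    have : π i = π j := by
      rw [this, hσ]; simp [Equiv.swap_apply_left]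
    exact hij (π.injective this)
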